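/- Let k be a field of characteristic 2 and a₁, a₂ ∈ k with g(ζ) ≡ ζ(1 + a₁ζ + a₂ζ²) mod ζ⁴ in k[[ζ]]. Then g is minimally ramified (meaning i_n(g) = 2^{n+1} − 1 for all n ≥ 0, where i_n(g) = ord((g^{2^n}(ζ) − ζ)/ζ)) if and only if a₁ ≠ 0, a₂ ≠ 0, and a₂ ≠ a₁². -/

import Mathlib

open PowerSeries

/-- Formal composition `f ∘ g` of power series (correct when `g` has zero constant term). -/
noncomputable def fcomp {k : Type*} [CommRing k] (f g : PowerSeries k) : PowerSeries k :=
  PowerSeries.mk fun n =>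
    ∑ m ∈ Finset.range (n + 1), (PowerSeries.coeff m f) * (PowerSeries.coeff n (g ^ m))

/-- `m`-th iterate of a power series with zero constant term. -/
noncomputable def fit {k : Type*} [CommRing k] (g : PowerSeries k) : ℕ → PowerSeries k
  | 0 => PowerSeries.X
  | n + 1 => fcomp g (fit g n)

/-! Write an iterate as `h = X + X^q T` with `q = 2^m` and `T ≡ u + v X mod X^2`. In
characteristic `2` Frobenius gives `h^q = X^q + X^(q²) T^q`, hence
`h ∘ h = X + X^q (T ∘ h - T) + X^(q²) T^q (T ∘ h)`, while `T ∘ h - T ≡ uv X^q + v² X^(q+1)`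
mod `X^(q+2)` because `h ≡ X` mod `X^q`. For `q ≥ 4` the last term is negligible and squaring
the iterate sends `(q, u, v)` to `(2q, uv, v²)`; for `q = 2` it contributes `u³ X^4 + u²v X^5`,
so `g ∘ g` has data `(4, a₁(a₁² + a₂), a₂(a₁² + a₂))`. The order of `g^{2^n} - X` is then
`2^(n+1)` exactly when the leading coefficient `u` of the `n`-th stage is nonzero. -/

section

variable {R : Type*} [CommRing R]

namespace PowerSeries

instance {S : Type*} [Semiring S] (p : ℕ) [CharP S p] : CharP S⟦X⟧ p :=
  charP_of_injective_ringHom C_injective p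

theorem coeff_pow_eq_zero_of_lt {a : R⟦X⟧} (ha : constantCoeff a = 0) {n m : ℕ} (h : n < m) :
    coeff n (a ^ m) = 0 :=
  X_pow_dvd_iff.1 (pow_dvd_pow_of_dvd (X_dvd_iff.2 ha) m) n h

theorem coeff_subst_eq_sum_range {a : R⟦X⟧} (ha : constantCoeff a = 0) (f : R⟦X⟧) (n : ℕ) :
    coeff n (f.subst a) = ∑ m ∈ Finset.range (n + 1), coeff m f * coeff n (a ^ m) := by
  rw [coeff_subst' (HasSubst.of_constantCoeff_zero' ha),
    finsum_eq_sum_of_support_subset (s := Finset.range (n + 1))]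
  · simp only [smul_eq_mul]
  · intro m hm
    by_contra hmn
    simp only [Finset.coe_range, Set.mem_Iio, not_lt] at hmn
    exact hm (by simp only [coeff_pow_eq_zero_of_lt ha (show n < m by omega), smul_zero])

theorem X_pow_dvd_subst_sub_subst {a b : R⟦X⟧} (ha : constantCoeff a = 0)
    (hb : constantCoeff b = 0) {N : ℕ} (hab : X ^ N ∣ a - b) (f : R⟦X⟧) :
    X ^ N ∣ f.subst a - f.subst b := by
  refine X_pow_dvd_iff.2 fun n hn => ?_
  rw [map_sub, coeff_subst_eq_sum_range ha, coeff_subst_eq_sum_range hb, sub_eq_zero]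
  refine Finset.sum_congr rfl fun m _ => ?_
  rw [← sub_eq_zero, ← mul_sub, ← map_sub,
    X_pow_dvd_iff.1 (hab.trans (sub_dvd_pow_sub_pow a b m)) n hn, mul_zero]

theorem order_eq_iff_of_X_pow_succ_dvd_sub {φ : R⟦X⟧} {u : R} {q : ℕ}
    (h : X ^ (q + 1) ∣ φ - C u * X ^ q) : order φ = q ↔ u ≠ 0 := by
  have hcoeff : ∀ i ≤ q, coeff i φ = if i = q then u else 0 := by
    intro i hi
    have := X_pow_dvd_iff.1 h i (by omega)
    rwa [map_sub, coeff_C_mul_X_pow, sub_eq_zero] at this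
  rw [order_eq_nat, hcoeff q le_rfl, if_pos rfl]
  exact ⟨fun h => h.1, fun hu => ⟨hu, fun i hi => by rw [hcoeff i hi.le, if_neg hi.ne]⟩⟩

end PowerSeries

variable {g : R⟦X⟧}

theorem fcomp_eq_subst (hg : constantCoeff g = 0) (f : R⟦X⟧) : fcomp f g = f.subst g := by
  ext n
  rw [fcomp, coeff_mk, coeff_subst_eq_sum_range hg]

theorem constantCoeff_fit (hg : constantCoeff g = 0) (n : ℕ) : constantCoeff (fit g n) = 0 := by
  cases n with
  | zero => exact constantCoeff_X
  | succ n =>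
    rw [fit, fcomp, ← coeff_zero_eq_constantCoeff_apply, coeff_mk]
    simp [hg]

theorem fit_succ (hg : constantCoeff g = 0) (n : ℕ) : fit g (n + 1) = g.subst (fit g n) :=
  fcomp_eq_subst (constantCoeff_fit hg n) g

theorem fit_one : fit g 1 = g := by
  rw [fit, fit, fcomp_eq_subst constantCoeff_X, X_subst]

theorem fit_add (hg : constantCoeff g = 0) (m n : ℕ) :
    fit g (m + n) = (fit g m).subst (fit g n) := by
  have hsub := fun n => HasSubst.of_constantCoeff_zero' (constantCoeff_fit hg n)
  induction m with
  | zero => rw [zero_add, fit, subst_X (hsub n)]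
  | succ m ih =>
    rw [Nat.add_right_comm, fit_succ hg, ih, fit_succ hg,
      subst_comp_subst_apply (hsub m) (hsub n)]

theorem fit_mul (hg : constantCoeff g = 0) (m n : ℕ) : fit g (m * n) = fit (fit g m) n := by
  induction n with
  | zero => rfl
  | succ n ih =>
    rw [Nat.mul_succ, add_comm, fit_add hg, ih, fit_succ (constantCoeff_fit hg m)]

def HasInitialTerms (h : R⟦X⟧) (q : ℕ) (u v : R) : Prop :=
  X ^ (q + 2) ∣ h - (X + C u * X ^ q + C v * X ^ (q + 1))

namespace HasInitialTerms

variable {h : R⟦X⟧} {q m : ℕ} {u v : R}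

theorem constantCoeff_eq_zero (hh : HasInitialTerms h q u v) (hq : q ≠ 0) :
    constantCoeff h = 0 := by
  have := X_pow_dvd_iff.1 hh 0 (by omega)
  simpa [coeff_X_pow, hq.symm, zero_pow hq] using this

theorem order_sub_X (hh : HasInitialTerms h q u v) : order (h - X) = q ↔ u ≠ 0 := by
  obtain ⟨r, hr⟩ := hh
  exact order_eq_iff_of_X_pow_succ_dvd_sub ⟨C v + X * r, by linear_combination hr⟩

end HasInitialTerms

section CharTwo

variable [CharP R 2]

theorem subst_self_eq_of_eq_X_add {h : R⟦X⟧} (m : ℕ) (T : R⟦X⟧) (hh : h = X + X ^ 2 ^ m * T) :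
    h.subst h = X + X ^ 2 ^ m * (T.subst h - T) + X ^ (2 ^ m * 2 ^ m) * T ^ 2 ^ m * T.subst h := by
  have hs : HasSubst h := HasSubst.of_constantCoeff_zero' (by simp [hh])
  have hfrob : h ^ 2 ^ m = X ^ 2 ^ m + X ^ (2 ^ m * 2 ^ m) * T ^ 2 ^ m := by
    rw [hh, add_pow_char_pow, mul_pow, ← pow_mul]
  calc h.subst h = (X + X ^ 2 ^ m * T).subst h := by rw [← hh]
    _ = _ := by
      rw [subst_add hs, subst_mul hs, subst_pow hs, subst_X hs, hfrob]
      linear_combination hh + (X ^ 2 ^ m * T) * CharTwo.two_eq_zero (R := R⟦X⟧)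

theorem X_pow_dvd_subst_sub_self {h T r : R⟦X⟧} {q : ℕ} {u v : R} (hq : 2 ≤ q)
    (hh : h = X + X ^ q * T) (hT : T = C u + C v * X + X ^ 2 * r) :
    X ^ (q + 2) ∣ T.subst h - T - X ^ q * (C (u * v) + C (v ^ 2) * X) := by
  have h0 : constantCoeff h = 0 := by simp [hh, zero_pow (show q ≠ 0 by omega)]
  have hs : HasSubst h := HasSubst.of_constantCoeff_zero' h0
  obtain ⟨D, hD⟩ : X ^ q ∣ r.subst h - r := by
    simpa using X_pow_dvd_subst_sub_subst h0 constantCoeff_X ⟨T, by rw [hh]; ring⟩ r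
  have hsq : h ^ 2 = X ^ 2 + X ^ (2 * q) * T ^ 2 := by
    rw [hh, CharTwo.add_sq, mul_pow, ← pow_mul, mul_comm q]
  have hTh : T.subst h = C u + C v * h + h ^ 2 * r.subst h := by
    rw [hT, subst_add hs, subst_add hs, subst_mul hs, subst_mul hs, subst_pow hs, subst_X hs]
    rw [subst_C, subst_C]
    rfl
  obtain ⟨e, rfl⟩ := Nat.exists_eq_add_of_le' hq
  refine ⟨C v * r + X ^ e * T ^ 2 * r.subst h + D, ?_⟩
  rw [hTh, hsq, map_mul, map_pow]
  linear_combination X ^ 2 * hD + C v * hh + (X ^ (e + 2) * C v - 1) * hT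

namespace HasInitialTerms

variable {h : R⟦X⟧} {m : ℕ} {u v : R}

theorem subst_self (hm : 2 ≤ m) (hh : HasInitialTerms h (2 ^ m) u v) :
    HasInitialTerms (h.subst h) (2 ^ (m + 1)) (u * v) (v ^ 2) := by
  obtain ⟨r, hr⟩ := hh
  set q := 2 ^ m with hq
  set T := C u + C v * X + X ^ 2 * r with hT
  have hhT : h = X + X ^ q * T := by linear_combination hr
  have hq4 : 4 ≤ q := Nat.pow_le_pow_right two_pos hm
  obtain ⟨A, hA⟩ := X_pow_dvd_subst_sub_self (by omega) hhT hT
  obtain ⟨e, he⟩ : ∃ e, q * q = 2 * q + 2 + e := Nat.exists_eq_add_of_le (by nlinarith)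
  refine ⟨A + X ^ e * T ^ q * T.subst h, ?_⟩
  rw [subst_self_eq_of_eq_X_add m T hhT, ← hq, he, pow_succ, ← hq]
  linear_combination X ^ q * hA

theorem subst_self_of_two (hh : HasInitialTerms h 2 u v) :
    HasInitialTerms (h.subst h) 4 (u * (u ^ 2 + v)) (v * (u ^ 2 + v)) := by
  obtain ⟨r, hr⟩ := hh
  set T := C u + C v * X + X ^ 2 * r with hT
  have hhT : h = X + X ^ 2 ^ 1 * T := by linear_combination hr
  obtain ⟨A, hA⟩ := X_pow_dvd_subst_sub_self le_rfl hhT hT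
  have hT2 : T ^ 2 = C (u ^ 2) + C (v ^ 2) * X ^ 2 + X ^ 4 * r ^ 2 := by
    rw [hT, CharTwo.add_sq, CharTwo.add_sq, mul_pow, mul_pow, ← pow_mul, map_pow, map_pow]
  refine ⟨A + C (u ^ 2) * r + C (v ^ 2) * T + X ^ 2 * r ^ 2 * T
    + T ^ 2 * (C (u * v) + C (v ^ 2) * X + X ^ 2 * A), ?_⟩
  rw [subst_self_eq_of_eq_X_add 1 T hhT]
  simp only [map_mul, map_add, map_pow] at hA hT2 ⊢
  linear_combination (X ^ 2 + X ^ 4 * T ^ 2) * hA + X ^ 4 * T * hT2 + X ^ 4 * C u ^ 2 * hT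

theorem fit_two_pow (hm : 2 ≤ m) (hh : HasInitialTerms h (2 ^ m) u v) (n : ℕ) :
    HasInitialTerms (fit h (2 ^ n)) (2 ^ (m + n)) (u * v ^ (2 ^ n - 1)) (v ^ 2 ^ n) := by
  have h0 : constantCoeff h = 0 := hh.constantCoeff_eq_zero (by positivity)
  induction n with
  | zero => simpa [fit_one] using hh
  | succ n ih =>
    have hexp : 2 ^ n - 1 + 2 ^ n = 2 ^ (n + 1) - 1 := by
      have := Nat.one_le_two_pow (n := n)
      rw [pow_succ]
      omega
    have key := ih.subst_self (by omega)
    rw [mul_assoc, ← pow_add, hexp, ← pow_mul, ← pow_succ] at key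
    have hfit : fit h (2 ^ (n + 1)) = (fit h (2 ^ n)).subst (fit h (2 ^ n)) := by
      rw [pow_succ, mul_two, fit_add h0]
    rwa [hfit]

end HasInitialTerms

end CharTwo

end

/-- Let `k` have characteristic `2` and `g(ζ) ≡ ζ(1 + a₁ζ + a₂ζ²) mod ζ⁴`.  Then `g` is
minimally ramified — `i_n(g) = ord((g^{2^n}(ζ) - ζ)/ζ) = 2^{n+1} - 1` for all `n`, i.e.
`ord(g^{2^n}(ζ) - ζ) = 2^{n+1}` — if and only if `a₁ ≠ 0`, `a₂ ≠ 0`, and `a₂ ≠ a₁²`. -/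
theorem stmt16 {k : Type*} [Field k] [CharP k 2]
    (a₁ a₂ : k) (g : PowerSeries k)
    (hg : (PowerSeries.X : PowerSeries k) ^ 4 ∣
      g - PowerSeries.X * (1 + PowerSeries.C a₁ * PowerSeries.X
        + PowerSeries.C a₂ * PowerSeries.X ^ 2)) :
    (∀ n : ℕ, PowerSeries.order (fit g (2 ^ n) - PowerSeries.X) = ((2 ^ (n + 1) : ℕ) : ℕ∞))
      ↔ (a₁ ≠ 0 ∧ a₂ ≠ 0 ∧ a₂ ≠ a₁ ^ 2) := by
  have hg' : HasInitialTerms g 2 a₁ a₂ := by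
    obtain ⟨r, hr⟩ := hg
    exact ⟨r, by linear_combination hr⟩
  have h0 : constantCoeff g = 0 := hg'.constantCoeff_eq_zero two_ne_zero
  set u := a₁ * (a₁ ^ 2 + a₂)
  set v := a₂ * (a₁ ^ 2 + a₂)
  have hiter (n : ℕ) :
      HasInitialTerms (fit g (2 ^ (n + 1))) (2 ^ (n + 2)) (u * v ^ (2 ^ n - 1)) (v ^ 2 ^ n) := by
    have h2 : fit g 2 = g.subst g := by rw [fit_succ h0, fit_one]
    rw [pow_succ', fit_mul h0, h2, add_comm n]
    exact hg'.subst_self_of_two.fit_two_pow le_rfl n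
  have hfactor : a₁ ^ 2 + a₂ ≠ 0 ↔ a₂ ≠ a₁ ^ 2 := by
    rw [ne_eq, CharTwo.add_eq_zero, eq_comm]
  constructor
  · intro H
    have ha₁ : a₁ ≠ 0 := hg'.order_sub_X.1 (by simpa [fit_one] using H 0)
    have hu : u ≠ 0 := by simpa using (hiter 0).order_sub_X.1 (H 1)
    have hv : v ≠ 0 := by simpa [hu] using (hiter 1).order_sub_X.1 (H 2)
    exact ⟨ha₁, left_ne_zero_of_mul hv, hfactor.1 (right_ne_zero_of_mul hu)⟩
  · rintro ⟨ha₁, ha₂, hne⟩ (_ | n)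
    · simpa [fit_one] using hg'.order_sub_X.2 ha₁
    · have hs := hfactor.2 hne
      exact (hiter n).order_sub_X.2
        (mul_ne_zero (mul_ne_zero ha₁ hs) (pow_ne_zero _ (mul_ne_zero ha₂ hs)))
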